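/- Let n ≥ 1, let A be an n×n real symmetric matrix with nonnegative entries and zero diagonal, let β ≥ 0 and α ∈ [0,1], and set Â = A + β·I and d_u = Σ_v A_{uv}; assume d_v ≥ 1 for every node v. Let Z ∈ ℝ^{n×p}, and let S be the symmetrized convolution operator S_{uv} = Â_{uv}/((d_u+β)^α (d_v+β)^α). Then for every node u, the Euclidean norm of the u-th row of SZ satisfies ‖(SZ)_u‖₂ ≤ ‖Z‖_{2,∞} · ( (d_u+β)^{1-2α} - α·Δ̄_u·(d_u+β)^{-2α} + (α(α+1)M/2)·Δ̄²_u·(d_u+β)^{-1-2α} ), where Δ̄_u = Σ_v Â_{uv}(d_v - d_u)/(d_u+β), Δ̄²_u = Σ_v Â_{uv}(d_v - d_u)²/(d_u+β), M = ((d_max+β)/(1+β))^{α+2}, d_max = max_v d_v, and ‖Z‖_{2,∞} = max_v ‖Z_v‖₂. -/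

import Mathlib

open Real Finset

/-!
As `S` has nonnegative entries, the triangle inequality bounds `‖(SZ)_u‖₂` by `‖Z‖_{2,∞}` times
the row sum `∑_v S_{uv} = (d_u+β)^{-α} ∑_v Â_{uv} (d_v+β)^{-α}`. All `d_v + β` lie in
`[m, ∞)` with `m = 1 + β`, where `t ↦ α(α+1)/2 · m^{-α-2} t² - t^{-α}` is convex; its tangent
line at `d_u + β` bounds `(d_v+β)^{-α}` by its second-order Taylor polynomial at `d_u + β` with
remainder constant `α(α+1)/2 · m^{-α-2}`. Summing against the weights `Â_{uv}` (whose sum is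
`d_u + β`) produces `Δ̄_u` and `Δ̄²_u`, and `((d_u+β)/m)^{α+2} ≤ M` turns the remainder constant
into the stated one.
-/

theorem Matrix.sum_add_smul_one_apply {ι R : Type*} [Fintype ι] [DecidableEq ι]
    [NonAssocSemiring R] (A : Matrix ι ι R) (β : R) (u : ι) :
    ∑ v, (A + β • (1 : Matrix ι ι R)) u v = ∑ v, A u v + β := by
  simp [Matrix.one_apply, Finset.sum_add_distrib]

theorem Matrix.add_smul_one_apply_nonneg {ι R : Type*} [DecidableEq ι] [Semiring R]
    [PartialOrder R] [IsOrderedRing R] {A : Matrix ι ι R} {β : R} {u v : ι}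
    (hA : 0 ≤ A u v) (hβ : 0 ≤ β) : 0 ≤ (A + β • (1 : Matrix ι ι R)) u v := by
  rw [Matrix.add_apply, Matrix.smul_apply, Matrix.one_apply]
  split_ifs <;> simp [add_nonneg, hA, hβ]

theorem ConvexOn.add_mul_sub_le_of_hasDerivAt {S : Set ℝ} {f : ℝ → ℝ} {f' x y : ℝ}
    (hf : ConvexOn ℝ S f) (hx : x ∈ S) (hy : y ∈ S) (hf' : HasDerivAt f f' y) :
    f y + f' * (x - y) ≤ f x := by
  rcases lt_trichotomy x y with hxy | rfl | hxy
  · have h := hf.slope_le_of_hasDerivAt hx hy hxy hf'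
    rw [slope_def_field, div_le_iff₀ (sub_pos.2 hxy)] at h
    linarith
  · simp
  · have h := hf.le_slope_of_hasDerivAt hy hx hxy hf'
    rw [slope_def_field, le_div_iff₀ (sub_pos.2 hxy)] at h
    linarith

theorem convexOn_mul_sq_sub_rpow_neg {m α : ℝ} (hm : 0 < m) (hα : 0 ≤ α) :
    ConvexOn ℝ (Set.Ici m) fun t => α * (α + 1) / 2 * m ^ (-α - 2) * t ^ 2 - t ^ (-α) := by
  set C := α * (α + 1) / 2 * m ^ (-α - 2)
  have hf : ∀ t, 0 < t → HasDerivAt (fun t => C * t ^ 2 - t ^ (-α))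
      (C * (2 * t) + α * t ^ (-α - 1)) t := fun t ht =>
    (((hasDerivAt_pow 2 t).const_mul C).sub
      (hasDerivAt_rpow_const (p := -α) (.inl ht.ne'))).congr_deriv (by ring)
  have hf' : ∀ t, 0 < t → HasDerivAt (fun t => C * (2 * t) + α * t ^ (-α - 1))
      (2 * C - α * (α + 1) * t ^ (-α - 2)) t := fun t ht =>
    ((((hasDerivAt_id' t).const_mul 2).const_mul C).add
      ((hasDerivAt_rpow_const (p := -α - 1) (.inl ht.ne')).const_mul α)).congr_deriv
      (by rw [show -α - 1 - 1 = -α - 2 by ring]; ring)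
  refine convexOn_of_hasDerivWithinAt2_nonneg (convex_Ici m)
    (f' := fun t => C * (2 * t) + α * t ^ (-α - 1))
    (f'' := fun t => 2 * C - α * (α + 1) * t ^ (-α - 2))
    (fun t ht => (hf t (hm.trans_le ht)).continuousAt.continuousWithinAt) ?_ ?_ ?_
  all_goals simp only [interior_Ici]
  · exact fun t ht => (hf t (hm.trans ht)).hasDerivWithinAt
  · exact fun t ht => (hf' t (hm.trans ht)).hasDerivWithinAt
  · intro t ht
    have : t ^ (-α - 2) ≤ m ^ (-α - 2) := rpow_le_rpow_of_nonpos hm ht.le (by linarith)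
    have : 0 ≤ α * (α + 1) := by positivity
    simp only [C]
    nlinarith

theorem rpow_neg_le_taylor {m α x y : ℝ} (hm : 0 < m) (hα : 0 ≤ α) (hx : m ≤ x) (hy : m ≤ y) :
    x ^ (-α) ≤ y ^ (-α) - α * y ^ (-α - 1) * (x - y) +
      α * (α + 1) / 2 * m ^ (-α - 2) * (x - y) ^ 2 := by
  have hderiv : HasDerivAt (fun t => α * (α + 1) / 2 * m ^ (-α - 2) * t ^ 2 - t ^ (-α))
      (α * (α + 1) / 2 * m ^ (-α - 2) * (2 * y) + α * y ^ (-α - 1)) y :=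
    (((hasDerivAt_pow 2 y).const_mul _).sub
      (hasDerivAt_rpow_const (p := -α) (.inl (hm.trans_le hy).ne'))).congr_deriv (by ring)
  have := (convexOn_mul_sq_sub_rpow_neg hm hα).add_mul_sub_le_of_hasDerivAt
    (Set.mem_Ici.2 hx) (Set.mem_Ici.2 hy) hderiv
  linarith

theorem sum_mul_rpow_neg_le {ι : Type*} [Fintype ι] {w x : ι → ℝ} {m y α : ℝ}
    (hm : 0 < m) (hα : 0 ≤ α) (hw : ∀ v, 0 ≤ w v) (hx : ∀ v, m ≤ x v) (hy : m ≤ y) :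
    ∑ v, w v * x v ^ (-α) ≤ (∑ v, w v) * y ^ (-α) - α * y ^ (-α - 1) * ∑ v, w v * (x v - y) +
      α * (α + 1) / 2 * m ^ (-α - 2) * ∑ v, w v * (x v - y) ^ 2 := by
  simp only [Finset.mul_sum, Finset.sum_mul, ← Finset.sum_sub_distrib, ← Finset.sum_add_distrib]
  refine Finset.sum_le_sum fun v _ => ?_
  have := mul_le_mul_of_nonneg_left (rpow_neg_le_taylor hm hα (hx v) hy) (hw v)
  linarith

theorem rpow_neg_mul_sum_mul_rpow_neg_le {ι : Type*} [Fintype ι] {w x : ι → ℝ} {m y α M : ℝ}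
    (hm : 0 < m) (hα : 0 ≤ α) (hw : ∀ v, 0 ≤ w v) (hx : ∀ v, m ≤ x v) (hy : m ≤ y)
    (hwy : ∑ v, w v = y) (hM : (y / m) ^ (α + 2) ≤ M) :
    y ^ (-α) * ∑ v, w v * x v ^ (-α) ≤
      y ^ (1 - 2 * α) - α * ((∑ v, w v * (x v - y)) / y) * y ^ (-(2 * α)) +
        α * (α + 1) * M / 2 * ((∑ v, w v * (x v - y) ^ 2) / y) * y ^ (-(1 + 2 * α)) := by
  have htaylor := sum_mul_rpow_neg_le hm hα hw hx hy
  rw [hwy] at htaylor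
  set E₁ := ∑ v, w v * (x v - y)
  set E₂ := ∑ v, w v * (x v - y) ^ 2
  set K := α * (α + 1) / 2
  have hy0 : 0 < y := hm.trans_le hy
  have hE₂ : 0 ≤ E₂ := Finset.sum_nonneg fun v _ => mul_nonneg (hw v) (sq_nonneg _)
  have h₁ : y ^ (1 - 2 * α) = y * y ^ (-α) * y ^ (-α) := by
    rw [show 1 - 2 * α = -α + -α + 1 by ring, rpow_add_one hy0.ne', rpow_add hy0]; ring
  have h₂ : y ^ (-α - 1) = y ^ (-α) / y := rpow_sub_one hy0.ne' _
  have h₃ : y ^ (-(2 * α)) = y ^ (-α) * y ^ (-α) := by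
    rw [← rpow_add hy0]; ring_nf
  have h₄ : (y / m) ^ (α + 2) * y ^ (-(1 + 2 * α)) / y = y ^ (-α) * m ^ (-α - 2) := by
    calc (y / m) ^ (α + 2) * y ^ (-(1 + 2 * α)) / y
        = y ^ (α + 2 + -(1 + 2 * α)) * m ^ (-α - 2) / y := by
          rw [rpow_add hy0, show -α - 2 = -(α + 2) by ring, rpow_neg hm.le,
            div_rpow hy0.le hm.le]
          ring
      _ = y ^ (-α) * m ^ (-α - 2) := by
          rw [show α + 2 + -(1 + 2 * α) = -α + 1 by ring, rpow_add_one hy0.ne']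
          field_simp
  calc y ^ (-α) * ∑ v, w v * x v ^ (-α)
      ≤ y ^ (-α) * (y * y ^ (-α) - α * y ^ (-α - 1) * E₁ + K * m ^ (-α - 2) * E₂) :=
        mul_le_mul_of_nonneg_left htaylor (by positivity)
    _ = y ^ (1 - 2 * α) - α * (E₁ / y) * y ^ (-(2 * α)) +
          K * E₂ * ((y / m) ^ (α + 2) * y ^ (-(1 + 2 * α)) / y) := by
        rw [h₁, h₂, h₃, h₄]; field_simp
    _ ≤ _ := by
        rw [show α * (α + 1) * M / 2 * (E₂ / y) * y ^ (-(1 + 2 * α)) =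
          K * E₂ * (M * y ^ (-(1 + 2 * α)) / y) by ring]
        gcongr

theorem sqrt_sum_sq_sum_mul_le {ι κ : Type*} [Fintype ι] [Fintype κ] {w : ι → ℝ}
    {Z : ι → κ → ℝ} {R : ℝ} (hw : ∀ v, 0 ≤ w v) (hZ : ∀ v, √(∑ j, Z v j ^ 2) ≤ R) :
    √(∑ j, (∑ v, w v * Z v j) ^ 2) ≤ R * ∑ v, w v := by
  have hnorm : ∀ z : κ → ℝ, ‖WithLp.toLp 2 z‖ = √(∑ j, z j ^ 2) := fun z => by
    simp [EuclideanSpace.norm_eq]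
  have hsum : WithLp.toLp 2 (fun j => ∑ v, w v * Z v j) = ∑ v, w v • WithLp.toLp 2 (Z v) := by
    ext j; simp
  calc √(∑ j, (∑ v, w v * Z v j) ^ 2) = ‖∑ v, w v • WithLp.toLp 2 (Z v)‖ := by
        rw [← hsum, hnorm]
    _ ≤ ∑ v, w v * √(∑ j, Z v j ^ 2) := by
        refine (norm_sum_le _ _).trans_eq (Finset.sum_congr rfl fun v _ => ?_)
        rw [norm_smul, Real.norm_of_nonneg (hw v), hnorm]
    _ ≤ ∑ v, w v * R := Finset.sum_le_sum fun v _ => mul_le_mul_of_nonneg_left (hZ v) (hw v)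
    _ = R * ∑ v, w v := by rw [Finset.mul_sum]; simp only [mul_comm]

theorem sym_conv_row_norm_bound_general (n p : ℕ)
    (A : Matrix (Fin n) (Fin n) ℝ)
    (hA_nonneg : ∀ u v, 0 ≤ A u v)
    (β α : ℝ) (hβ : 0 ≤ β) (hα : α ∈ Set.Icc (0 : ℝ) 1)
    (d : Fin n → ℝ) (hd : ∀ u, d u = ∑ v, A u v) (hd1 : ∀ v, 1 ≤ d v)
    (Ahat : Matrix (Fin n) (Fin n) ℝ)
    (hAhat : Ahat = A + β • (1 : Matrix (Fin n) (Fin n) ℝ))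
    (S : Matrix (Fin n) (Fin n) ℝ)
    (hS : ∀ u v, S u v = Ahat u v / ((d u + β) ^ α * (d v + β) ^ α))
    (Z : Matrix (Fin n) (Fin p) ℝ)
    (dmax : ℝ) (hdmax : IsGreatest (Set.range d) dmax)
    (M : ℝ) (hM : M = ((dmax + β) / (1 + β)) ^ (α + 2))
    (Znorm : ℝ)
    (hZnorm : IsGreatest (Set.range fun v => Real.sqrt (∑ j, (Z v j) ^ 2)) Znorm)
    (Δ₁ Δ₂ : Fin n → ℝ)
    (hΔ₁ : ∀ u, Δ₁ u = (∑ v, Ahat u v * (d v - d u)) / (d u + β))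
    (hΔ₂ : ∀ u, Δ₂ u = (∑ v, Ahat u v * (d v - d u) ^ 2) / (d u + β)) :
    ∀ u : Fin n,
      Real.sqrt (∑ j, ((S * Z) u j) ^ 2) ≤
        Znorm * ((d u + β) ^ (1 - 2 * α) - α * Δ₁ u * (d u + β) ^ (-(2 * α)) +
          (α * (α + 1) * M / 2) * Δ₂ u * (d u + β) ^ (-(1 + 2 * α))) := by
  intro u
  have hm : 0 < 1 + β := by linarith
  have hdβ : ∀ v, 1 + β ≤ d v + β := fun v => by linarith [hd1 v]
  have hpos : ∀ v, 0 < d v + β := fun v => hm.trans_le (hdβ v)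
  have hAhat_nonneg : ∀ v, 0 ≤ Ahat u v := fun v =>
    hAhat ▸ Matrix.add_smul_one_apply_nonneg (hA_nonneg u v) hβ
  have hrow : ∑ v, Ahat u v = d u + β := by rw [hAhat, Matrix.sum_add_smul_one_apply, hd]
  have hS_eq : ∀ v, S u v = (d u + β) ^ (-α) * (Ahat u v * (d v + β) ^ (-α)) := fun v => by
    rw [hS, rpow_neg (hpos u).le, rpow_neg (hpos v).le]; ring
  have hS_nonneg : ∀ v, 0 ≤ S u v := fun v => hS_eq v ▸
    mul_nonneg (rpow_nonneg (hpos u).le _) (mul_nonneg (hAhat_nonneg v) (rpow_nonneg (hpos v).le _))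
  have hSrow : ∑ v, S u v = (d u + β) ^ (-α) * ∑ v, Ahat u v * (d v + β) ^ (-α) := by
    simp only [hS_eq, Finset.mul_sum]
  have hM' : ((d u + β) / (1 + β)) ^ (α + 2) ≤ M := by
    rw [hM]
    gcongr
    · exact div_nonneg (hpos u).le hm.le
    · linarith [hα.1]
    · exact hdmax.2 ⟨u, rfl⟩
  have hZnorm_nonneg : 0 ≤ Znorm := by
    obtain ⟨v, hv⟩ := hZnorm.1
    exact hv ▸ Real.sqrt_nonneg _
  have hbound := rpow_neg_mul_sum_mul_rpow_neg_le hm hα.1 hAhat_nonneg hdβ (hdβ u) hrow hM'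
  simp only [add_sub_add_right_eq_sub, ← hΔ₁, ← hΔ₂, ← hSrow] at hbound
  calc √(∑ j, ((S * Z) u j) ^ 2) ≤ Znorm * ∑ v, S u v :=
        sqrt_sum_sq_sum_mul_le hS_nonneg fun v => hZnorm.2 ⟨v, rfl⟩
    _ ≤ _ := mul_le_mul_of_nonneg_left hbound hZnorm_nonneg

/-- Lemma 3.1: row-norm bound for the symmetrized graph convolution.  For a weighted
adjacency matrix `A` (symmetric, nonnegative, zero diagonal) with degrees `d_v ≥ 1`,
`Â = A + β I`, and `S_{uv} = Â_{uv}/((d_u+β)^α (d_v+β)^α)`, the Euclidean norm of each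
row of `S Z` is at most
`‖Z‖_{2,∞} ((d_u+β)^{1-2α} - α Δ̄_u (d_u+β)^{-2α} + (α(α+1)M/2) Δ̄²_u (d_u+β)^{-1-2α})`. -/
theorem sym_conv_row_norm_bound (n p : ℕ) (hn : 1 ≤ n)
    (A : Matrix (Fin n) (Fin n) ℝ) (hA_symm : A.IsSymm)
    (hA_nonneg : ∀ u v, 0 ≤ A u v) (hA_diag : ∀ u, A u u = 0)
    (β α : ℝ) (hβ : 0 ≤ β) (hα : α ∈ Set.Icc (0 : ℝ) 1)
    (d : Fin n → ℝ) (hd : ∀ u, d u = ∑ v, A u v) (hd1 : ∀ v, 1 ≤ d v)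
    (Ahat : Matrix (Fin n) (Fin n) ℝ)
    (hAhat : Ahat = A + β • (1 : Matrix (Fin n) (Fin n) ℝ))
    (S : Matrix (Fin n) (Fin n) ℝ)
    (hS : ∀ u v, S u v = Ahat u v / ((d u + β) ^ α * (d v + β) ^ α))
    (Z : Matrix (Fin n) (Fin p) ℝ)
    (dmax : ℝ) (hdmax : IsGreatest (Set.range d) dmax)
    (M : ℝ) (hM : M = ((dmax + β) / (1 + β)) ^ (α + 2))
    (Znorm : ℝ)
    (hZnorm : IsGreatest (Set.range fun v => Real.sqrt (∑ j, (Z v j) ^ 2)) Znorm)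
    (Δ₁ Δ₂ : Fin n → ℝ)
    (hΔ₁ : ∀ u, Δ₁ u = (∑ v, Ahat u v * (d v - d u)) / (d u + β))
    (hΔ₂ : ∀ u, Δ₂ u = (∑ v, Ahat u v * (d v - d u) ^ 2) / (d u + β)) :
    ∀ u : Fin n,
      Real.sqrt (∑ j, ((S * Z) u j) ^ 2) ≤
        Znorm * ((d u + β) ^ (1 - 2 * α) - α * Δ₁ u * (d u + β) ^ (-(2 * α)) +
          (α * (α + 1) * M / 2) * Δ₂ u * (d u + β) ^ (-(1 + 2 * α))) :=
  sym_conv_row_norm_bound_general n p A hA_nonneg β α hβ hα d hd hd1 Ahat hAhat S hS Z dmax hdmax M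
    hM Znorm hZnorm Δ₁ Δ₂ hΔ₁ hΔ₂
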